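/- arXiv:2108.02784 — 5 statements merged into one kernel-verified Lean document; each statement's English description precedes it below -/
import Mathlib

section
/- Let m ≥ 1, λ₁,…,λ_m ∈ ℝ, S : ℝ^m → ℝ^m smooth, Q₀ : ℝ → ℝ^m smooth, α ∈ (0,1). Define ξ_{ℓk} = x − λ_ℓ t(1−α) − λ_k αt, Q*_{kℓ} = Q_{k,0}(ξ_{ℓk}) + αt S_k(Q₀(ξ_{ℓk})), and Q^{(1)}_ℓ(t,x) = Q_{ℓ,0}(x−λ_ℓ t) + (1 − 1/(2α)) t S_ℓ(Q₀(x−λ_ℓ t)) + (t/(2α)) S_ℓ(Q*_{1ℓ},…,Q*_{mℓ}). Then Q^{(1)}_ℓ(t,x) = Q_ℓ(t,x) + O(t³) for each ℓ, where Q is the exact solution of (∂_t + λ_ℓ ∂_x)Q_ℓ = S_ℓ(Q). -/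
set_option maxHeartbeats 1000000


/-- RK2 evolution operator (Theorem 2 of the paper) for a linear hyperbolic system
with (possibly nonlinear) coupled source, in characteristic variables:
Q⁽¹⁾_ℓ(t,x) = Q_ℓ(t,x) + O(t³), stated as agreement of t-Taylor expansions up to t². -/
theorem stmt_4 (m : ℕ) (hm : 1 ≤ m) (lam : Fin m → ℝ)
    (S : (Fin m → ℝ) → Fin m → ℝ) (hS : ContDiff ℝ (⊤ : ℕ∞) S)
    (Q₀ : ℝ → Fin m → ℝ) (hQ₀ : ContDiff ℝ (⊤ : ℕ∞) Q₀)
    (Q : ℝ → ℝ → Fin m → ℝ) (hQ : ContDiff ℝ (⊤ : ℕ∞) (fun p : ℝ × ℝ => Q p.1 p.2))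
    (hpde : ∀ t x ℓ,
      deriv (fun τ => Q τ x ℓ) t + lam ℓ * deriv (fun y => Q t y ℓ) x = S (Q t x) ℓ)
    (hic : Q 0 = Q₀)
    (α : ℝ) (hα : α ∈ Set.Ioo (0:ℝ) 1)
    (x : ℝ) (ℓ : Fin m)
    (ξ : ℝ → Fin m → ℝ)
    (hξ : ξ = fun t k => x - lam ℓ * t * (1 - α) - lam k * α * t)
    (Qstar : ℝ → Fin m → ℝ)
    (hQstar : Qstar = fun t k => Q₀ (ξ t k) k + α * t * S (Q₀ (ξ t k)) k)
    (Q1 : ℝ → ℝ)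
    (hQ1 : Q1 = fun t => Q₀ (x - lam ℓ * t) ℓ
      + (1 - 1 / (2 * α)) * t * S (Q₀ (x - lam ℓ * t)) ℓ
      + (t / (2 * α)) * S (fun k => Qstar t k) ℓ) :
    ∀ n ≤ 2, iteratedDeriv n Q1 0 = iteratedDeriv n (fun t => Q t x ℓ) 0 := by
  obtain ⟨hα0, hα1⟩ := hα
  have hαne : α ≠ 0 := ne_of_gt hα0
  subst hξ; subst hQstar; subst hQ1
  -- basic smoothness
  have hSk : ∀ k, ContDiff ℝ (⊤ : ℕ∞) (fun u => S u k) := fun k => contDiff_pi.mp hS k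
  have hQ₀d : Differentiable ℝ Q₀ := hQ₀.differentiable (by simp)
  have hQ₀k : ∀ k, ContDiff ℝ (⊤ : ℕ∞) (fun y => Q₀ y k) := fun k => contDiff_pi.mp hQ₀ k
  have hQC : ∀ k, ContDiff ℝ (⊤ : ℕ∞) (fun p : ℝ × ℝ => Q p.1 p.2 k) := fun k => contDiff_pi.mp hQ k
  have hd : ∀ y k, HasDerivAt (fun z => Q₀ z k) (deriv Q₀ y k) y :=
    fun y k => hasDerivAt_pi.mp (hQ₀d y).hasDerivAt k
  have hgC : ContDiff ℝ (⊤ : ℕ∞) (fun t : ℝ => S (Q₀ (x - lam ℓ * t)) ℓ) := by fun_prop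
  have hhC : ContDiff ℝ (⊤ : ℕ∞) (fun t : ℝ => S (fun k => Q₀ (x - lam ℓ * t * (1 - α) - lam k * α * t) k
      + α * t * S (Q₀ (x - lam ℓ * t * (1 - α) - lam k * α * t)) k) ℓ) := by fun_prop
  -- linear inner function
  have l1 : ∀ t : ℝ, HasDerivAt (fun s : ℝ => x - lam ℓ * s) (-(lam ℓ * 1)) t :=
    fun t => (HasDerivAt.const_mul (lam ℓ) (hasDerivAt_id t)).const_sub x
  -- derivative of Q1 everywhere
  have hQ1' : ∀ t : ℝ, HasDerivAt (fun t => Q₀ (x - lam ℓ * t) ℓ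
      + (1 - 1 / (2 * α)) * t * S (Q₀ (x - lam ℓ * t)) ℓ
      + (t / (2 * α)) * S (fun k => Q₀ (x - lam ℓ * t * (1 - α) - lam k * α * t) k
          + α * t * S (Q₀ (x - lam ℓ * t * (1 - α) - lam k * α * t)) k) ℓ)
      (deriv (fun y => Q₀ y ℓ) (x - lam ℓ * t) * -(lam ℓ * 1)
        + ((1 - 1 / (2 * α)) * 1 * S (Q₀ (x - lam ℓ * t)) ℓ
          + (1 - 1 / (2 * α)) * t * deriv (fun s : ℝ => S (Q₀ (x - lam ℓ * s)) ℓ) t)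
        + (1 / (2 * α) * S (fun k => Q₀ (x - lam ℓ * t * (1 - α) - lam k * α * t) k
            + α * t * S (Q₀ (x - lam ℓ * t * (1 - α) - lam k * α * t)) k) ℓ
          + t / (2 * α) * deriv (fun s : ℝ => S (fun k => Q₀ (x - lam ℓ * s * (1 - α) - lam k * α * s) k
            + α * s * S (Q₀ (x - lam ℓ * s * (1 - α) - lam k * α * s)) k) ℓ) t)) t := by
    intro t
    have l2 : HasDerivAt (fun y => Q₀ y ℓ) (deriv (fun y => Q₀ y ℓ) (x - lam ℓ * t)) (x - lam ℓ * t) :=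
      (((hQ₀k ℓ).differentiable (by simp)) _).hasDerivAt
    have hg : HasDerivAt (fun s : ℝ => S (Q₀ (x - lam ℓ * s)) ℓ)
        (deriv (fun s : ℝ => S (Q₀ (x - lam ℓ * s)) ℓ) t) t :=
      (hgC.differentiable (by simp) t).hasDerivAt
    have hh : HasDerivAt (fun s : ℝ => S (fun k => Q₀ (x - lam ℓ * s * (1 - α) - lam k * α * s) k
        + α * s * S (Q₀ (x - lam ℓ * s * (1 - α) - lam k * α * s)) k) ℓ)
        (deriv (fun s : ℝ => S (fun k => Q₀ (x - lam ℓ * s * (1 - α) - lam k * α * s) k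
        + α * s * S (Q₀ (x - lam ℓ * s * (1 - α) - lam k * α * s)) k) ℓ) t) t :=
      (hhC.differentiable (by simp) t).hasDerivAt
    exact ((l2.comp t (l1 t)).add
      ((HasDerivAt.const_mul (1 - 1 / (2 * α)) (hasDerivAt_id t)).mul hg)).add
      (((hasDerivAt_id t).div_const (2 * α)).mul hh)
  have hQ1d : deriv (fun t => Q₀ (x - lam ℓ * t) ℓ
      + (1 - 1 / (2 * α)) * t * S (Q₀ (x - lam ℓ * t)) ℓ
      + (t / (2 * α)) * S (fun k => Q₀ (x - lam ℓ * t * (1 - α) - lam k * α * t) k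
          + α * t * S (Q₀ (x - lam ℓ * t * (1 - α) - lam k * α * t)) k) ℓ)
      = fun t => deriv (fun y => Q₀ y ℓ) (x - lam ℓ * t) * -(lam ℓ * 1)
        + ((1 - 1 / (2 * α)) * 1 * S (Q₀ (x - lam ℓ * t)) ℓ
          + (1 - 1 / (2 * α)) * t * deriv (fun s : ℝ => S (Q₀ (x - lam ℓ * s)) ℓ) t)
        + (1 / (2 * α) * S (fun k => Q₀ (x - lam ℓ * t * (1 - α) - lam k * α * t) k
            + α * t * S (Q₀ (x - lam ℓ * t * (1 - α) - lam k * α * t)) k) ℓ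
          + t / (2 * α) * deriv (fun s : ℝ => S (fun k => Q₀ (x - lam ℓ * s * (1 - α) - lam k * α * s) k
            + α * s * S (Q₀ (x - lam ℓ * s * (1 - α) - lam k * α * s)) k) ℓ) t) :=
    funext fun t => (hQ1' t).deriv
  -- derivative of g at 0 via chain rule
  have hv : HasDerivAt (fun s : ℝ => Q₀ (x - lam ℓ * s)) ((-(lam ℓ)) • deriv Q₀ x) 0 := by
    simpa [Function.comp_def] using HasDerivAt.scomp 0 (hQ₀d (x - lam ℓ * 0)).hasDerivAt (l1 0)
  have hg0 : HasDerivAt (fun s : ℝ => S (Q₀ (x - lam ℓ * s)) ℓ)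
      (fderiv ℝ (fun u => S u ℓ) (Q₀ x) ((-(lam ℓ)) • deriv Q₀ x)) 0 := by
    simpa [Function.comp_def] using ((hSk ℓ).differentiable (by simp) _).hasFDerivAt.comp_hasDerivAt 0 hv
  -- derivative of Qstar (as Pi-valued function) at 0
  have hW : HasDerivAt (fun s : ℝ => (fun k => Q₀ (x - lam ℓ * s * (1 - α) - lam k * α * s) k
      + α * s * S (Q₀ (x - lam ℓ * s * (1 - α) - lam k * α * s)) k))
      (fun k => α * S (Q₀ x) k - (lam ℓ * (1 - α) + lam k * α) * deriv Q₀ x k) 0 := by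
    apply hasDerivAt_pi.mpr
    intro k
    have lk : HasDerivAt (fun s : ℝ => x - lam ℓ * s * (1 - α) - lam k * α * s)
        (-(lam ℓ * 1 * (1 - α)) - lam k * α * 1) 0 :=
      (((HasDerivAt.const_mul (lam ℓ) (hasDerivAt_id 0)).mul_const (1 - α)).const_sub x).sub
        (HasDerivAt.const_mul (lam k * α) (hasDerivAt_id 0))
    have c1k := (hd (x - lam ℓ * 0 * (1 - α) - lam k * α * 0) k).comp 0 lk
    have hGkC : ContDiff ℝ (⊤ : ℕ∞) (fun s : ℝ => S (Q₀ (x - lam ℓ * s * (1 - α) - lam k * α * s)) k) := by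
      fun_prop
    have hGk : HasDerivAt (fun s : ℝ => S (Q₀ (x - lam ℓ * s * (1 - α) - lam k * α * s)) k)
        (deriv (fun s : ℝ => S (Q₀ (x - lam ℓ * s * (1 - α) - lam k * α * s)) k) 0) 0 :=
      (hGkC.differentiable (by simp) 0).hasDerivAt
    have c2k := (HasDerivAt.const_mul α (hasDerivAt_id 0)).mul hGk
    refine (c1k.add c2k).congr_deriv ?_
    norm_num
    ring
  -- derivative of h at 0 via chain rule
  have hQs0 : (fun k => Q₀ (x - lam ℓ * 0 * (1 - α) - lam k * α * 0) k
      + α * 0 * S (Q₀ (x - lam ℓ * 0 * (1 - α) - lam k * α * 0)) k) = Q₀ x := by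
    funext k; norm_num
  have hh0 : HasDerivAt (fun s : ℝ => S (fun k => Q₀ (x - lam ℓ * s * (1 - α) - lam k * α * s) k
      + α * s * S (Q₀ (x - lam ℓ * s * (1 - α) - lam k * α * s)) k) ℓ)
      (fderiv ℝ (fun u => S u ℓ) (Q₀ x)
        (fun k => α * S (Q₀ x) k - (lam ℓ * (1 - α) + lam k * α) * deriv Q₀ x k)) 0 := by
    have h := ((hSk ℓ).differentiable (by simp)
        ((fun k => Q₀ (x - lam ℓ * 0 * (1 - α) - lam k * α * 0) k
          + α * 0 * S (Q₀ (x - lam ℓ * 0 * (1 - α) - lam k * α * 0)) k))).hasFDerivAt.comp_hasDerivAt 0 hW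
    rw [hQs0] at h
    exact h
  -- exact solution: time derivative vector at 0
  have hQtx : ∀ k, ContDiff ℝ (⊤ : ℕ∞) (fun τ : ℝ => Q τ x k) :=
    fun k => (hQC k).comp (contDiff_id.prodMk contDiff_const)
  have hVcomp : ∀ k, deriv (fun τ => Q τ x k) 0 = S (Q₀ x) k - lam k * deriv Q₀ x k := by
    intro k
    have h1 := hpde 0 x k
    simp only [hic] at h1
    have h2 : deriv (fun y => Q₀ y k) x = deriv Q₀ x k := (hd x k).deriv
    rw [h2] at h1
    linarith
  have hV : HasDerivAt (fun τ => Q τ x) (fun k => S (Q₀ x) k - lam k * deriv Q₀ x k) 0 := by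
    apply hasDerivAt_pi.mpr
    intro k
    have h := ((hQtx k).differentiable (by simp) 0).hasDerivAt
    rwa [hVcomp k] at h
  have ha : HasDerivAt (fun t => S (Q t x) ℓ)
      (fderiv ℝ (fun u => S u ℓ) (Q₀ x) (fun k => S (Q₀ x) k - lam k * deriv Q₀ x k)) 0 := by
    have h := ((hSk ℓ).differentiable (by simp) (Q 0 x)).hasFDerivAt.comp_hasDerivAt 0 hV
    rw [hic] at h
    exact h
  -- Schwarz machinery
  have hFd : Differentiable ℝ (fun p : ℝ × ℝ => Q p.1 p.2 ℓ) := (hQC ℓ).differentiable (by simp)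
  have hb1 : ∀ t y : ℝ, HasDerivAt (fun y' => Q t y' ℓ)
      (fderiv ℝ (fun p : ℝ × ℝ => Q p.1 p.2 ℓ) (t, y) (0, 1)) y :=
    fun t y => (hFd (t, y)).hasFDerivAt.comp_hasDerivAt y
      (HasDerivAt.prodMk (hasDerivAt_const y t) (hasDerivAt_id y))
  have hb2 : ∀ t y : ℝ, HasDerivAt (fun τ => Q τ y ℓ)
      (fderiv ℝ (fun p : ℝ × ℝ => Q p.1 p.2 ℓ) (t, y) (1, 0)) t :=
    fun t y => by
      have h := (hFd (t, y)).hasFDerivAt.comp_hasDerivAt t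
        (HasDerivAt.prodMk (hasDerivAt_id' t) (hasDerivAt_const t y))
      exact h
  have hGsm : ContDiff ℝ (⊤ : ℕ∞) (fderiv ℝ (fun p : ℝ × ℝ => Q p.1 p.2 ℓ)) :=
    (hQC ℓ).fderiv_right (by simp)
  have hb3 : HasDerivAt (fun t : ℝ => fderiv ℝ (fun p : ℝ × ℝ => Q p.1 p.2 ℓ) (t, x) (0, 1))
      (fderiv ℝ (fderiv ℝ (fun p : ℝ × ℝ => Q p.1 p.2 ℓ)) (0, x) (1, 0) (0, 1)) 0 := by
    have h4 : HasDerivAt (fun t : ℝ => fderiv ℝ (fun p : ℝ × ℝ => Q p.1 p.2 ℓ) (t, x))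
        (fderiv ℝ (fderiv ℝ (fun p : ℝ × ℝ => Q p.1 p.2 ℓ)) (0, x) (1, 0)) 0 :=
      (hGsm.differentiable (by simp) (0, x)).hasFDerivAt.comp_hasDerivAt 0
        (HasDerivAt.prodMk (hasDerivAt_id' 0) (hasDerivAt_const 0 x))
    simpa using h4.clm_apply (hasDerivAt_const (0:ℝ) (((0:ℝ), (1:ℝ)) : ℝ × ℝ))
  have hb4 : HasDerivAt (fun y : ℝ => fderiv ℝ (fun p : ℝ × ℝ => Q p.1 p.2 ℓ) (0, y) (1, 0))
      (fderiv ℝ (fderiv ℝ (fun p : ℝ × ℝ => Q p.1 p.2 ℓ)) (0, x) (0, 1) (1, 0)) x := by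
    have h4 : HasDerivAt (fun y : ℝ => fderiv ℝ (fun p : ℝ × ℝ => Q p.1 p.2 ℓ) (0, y))
        (fderiv ℝ (fderiv ℝ (fun p : ℝ × ℝ => Q p.1 p.2 ℓ)) (0, x) (0, 1)) x :=
      (hGsm.differentiable (by simp) (0, x)).hasFDerivAt.comp_hasDerivAt x
        (HasDerivAt.prodMk (hasDerivAt_const x (0:ℝ)) (hasDerivAt_id x))
    simpa using h4.clm_apply (hasDerivAt_const (x:ℝ) (((1:ℝ), (0:ℝ)) : ℝ × ℝ))
  have hsym : fderiv ℝ (fderiv ℝ (fun p : ℝ × ℝ => Q p.1 p.2 ℓ)) (0, x) (1, 0) (0, 1)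
      = fderiv ℝ (fderiv ℝ (fun p : ℝ × ℝ => Q p.1 p.2 ℓ)) (0, x) (0, 1) (1, 0) :=
    (ContDiffAt.isSymmSndFDerivAt ((hQC ℓ).contDiffAt (x := ((0:ℝ), x))) (by simp; exact WithTop.coe_le_coe.mpr le_top)) _ _
  have hq'C : ContDiff ℝ (⊤:ℕ∞) (deriv (fun z => Q₀ z ℓ)) :=
    (contDiff_infty_iff_deriv.mp ((hQ₀k ℓ).of_le (by simp))).2
  have hFt : (fun y : ℝ => fderiv ℝ (fun p : ℝ × ℝ => Q p.1 p.2 ℓ) (0, y) (1, 0))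
      = fun y => S (Q₀ y) ℓ - lam ℓ * deriv (fun z => Q₀ z ℓ) y := by
    funext y
    rw [← (hb2 0 y).deriv]
    have h1 := hpde 0 y ℓ
    simp only [hic] at h1
    linarith
  have hφ : HasDerivAt (fun y => S (Q₀ y) ℓ - lam ℓ * deriv (fun z => Q₀ z ℓ) y)
      (fderiv ℝ (fun u => S u ℓ) (Q₀ x) (deriv Q₀ x)
        - lam ℓ * deriv (deriv (fun z => Q₀ z ℓ)) x) x :=
    (((hSk ℓ).differentiable (by simp) (Q₀ x)).hasFDerivAt.comp_hasDerivAt x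
      (hQ₀d x).hasDerivAt).sub
      (HasDerivAt.const_mul (lam ℓ) (((hq'C.differentiable (by simp)) x).hasDerivAt))
  have hB : HasDerivAt (fun t => deriv (fun y => Q t y ℓ) x)
      (fderiv ℝ (fun u => S u ℓ) (Q₀ x) (deriv Q₀ x)
        - lam ℓ * deriv (deriv (fun z => Q₀ z ℓ)) x) 0 := by
    have hfun : (fun t => deriv (fun y => Q t y ℓ) x)
        = fun t => fderiv ℝ (fun p : ℝ × ℝ => Q p.1 p.2 ℓ) (t, x) (0, 1) :=
      funext fun t => (hb1 t x).deriv
    rw [hfun]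
    have hval : fderiv ℝ (fderiv ℝ (fun p : ℝ × ℝ => Q p.1 p.2 ℓ)) (0, x) (1, 0) (0, 1)
        = fderiv ℝ (fun u => S u ℓ) (Q₀ x) (deriv Q₀ x)
          - lam ℓ * deriv (deriv (fun z => Q₀ z ℓ)) x := by
      have h5 := hb4.deriv
      rw [hFt] at h5
      rw [hsym, ← h5, hφ.deriv]
    exact hb3.congr_deriv hval
  have hf' : deriv (fun t => Q t x ℓ) = fun t => S (Q t x) ℓ - lam ℓ * deriv (fun y => Q t y ℓ) x :=
    funext fun t => by have h := hpde t x ℓ; linarith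
  intro n hn
  interval_cases n
  · simp only [iteratedDeriv_zero]
    norm_num [hic]
  · rw [iteratedDeriv_one, iteratedDeriv_one, hQ1d, hf']
    have h2 : deriv (fun y => Q₀ y ℓ) x = deriv Q₀ x ℓ := (hd x ℓ).deriv
    simp only [hic]
    norm_num [h2]
    field_simp
    ring
  · rw [show (2:ℕ) = 1 + 1 by norm_num, iteratedDeriv_succ, iteratedDeriv_one,
      iteratedDeriv_succ, iteratedDeriv_one, hQ1d, hf']
    -- second derivative of the scheme
    have hg0' : HasDerivAt (fun s : ℝ => S (Q₀ (x - lam ℓ * s)) ℓ)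
        (deriv (fun s : ℝ => S (Q₀ (x - lam ℓ * s)) ℓ) 0) 0 :=
      (hgC.differentiable (by simp) 0).hasDerivAt
    have hh0' : HasDerivAt (fun s : ℝ => S (fun k => Q₀ (x - lam ℓ * s * (1 - α) - lam k * α * s) k
        + α * s * S (Q₀ (x - lam ℓ * s * (1 - α) - lam k * α * s)) k) ℓ)
        (deriv (fun s : ℝ => S (fun k => Q₀ (x - lam ℓ * s * (1 - α) - lam k * α * s) k
        + α * s * S (Q₀ (x - lam ℓ * s * (1 - α) - lam k * α * s)) k) ℓ) 0) 0 :=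
      (hhC.differentiable (by simp) 0).hasDerivAt
    have hdg : HasDerivAt (deriv (fun s : ℝ => S (Q₀ (x - lam ℓ * s)) ℓ))
        (deriv (deriv (fun s : ℝ => S (Q₀ (x - lam ℓ * s)) ℓ)) 0) 0 :=
      (((contDiff_infty_iff_deriv.mp (hgC.of_le (by simp))).2.differentiable
        (by simp)) 0).hasDerivAt
    have hdh : HasDerivAt (deriv (fun s : ℝ => S (fun k => Q₀ (x - lam ℓ * s * (1 - α) - lam k * α * s) k
        + α * s * S (Q₀ (x - lam ℓ * s * (1 - α) - lam k * α * s)) k) ℓ))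
        (deriv (deriv (fun s : ℝ => S (fun k => Q₀ (x - lam ℓ * s * (1 - α) - lam k * α * s) k
        + α * s * S (Q₀ (x - lam ℓ * s * (1 - α) - lam k * α * s)) k) ℓ)) 0) 0 :=
      (((contDiff_infty_iff_deriv.mp (hhC.of_le (by simp))).2.differentiable
        (by simp)) 0).hasDerivAt
    have l2' : HasDerivAt (deriv (fun y => Q₀ y ℓ))
        (deriv (deriv (fun y => Q₀ y ℓ)) (x - lam ℓ * 0)) (x - lam ℓ * 0) :=
      (((contDiff_infty_iff_deriv.mp ((hQ₀k ℓ).of_le (by simp))).2.differentiable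
        (by simp)) _).hasDerivAt
    have hE0 : HasDerivAt (fun t => deriv (fun y => Q₀ y ℓ) (x - lam ℓ * t) * -(lam ℓ * 1)
        + ((1 - 1 / (2 * α)) * 1 * S (Q₀ (x - lam ℓ * t)) ℓ
          + (1 - 1 / (2 * α)) * t * deriv (fun s : ℝ => S (Q₀ (x - lam ℓ * s)) ℓ) t)
        + (1 / (2 * α) * S (fun k => Q₀ (x - lam ℓ * t * (1 - α) - lam k * α * t) k
            + α * t * S (Q₀ (x - lam ℓ * t * (1 - α) - lam k * α * t)) k) ℓ
          + t / (2 * α) * deriv (fun s : ℝ => S (fun k => Q₀ (x - lam ℓ * s * (1 - α) - lam k * α * s) k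
            + α * s * S (Q₀ (x - lam ℓ * s * (1 - α) - lam k * α * s)) k) ℓ) t))
        ((deriv (deriv (fun y => Q₀ y ℓ)) (x - lam ℓ * 0) * -(lam ℓ * 1)) * -(lam ℓ * 1)
          + ((1 - 1 / (2 * α)) * 1 * deriv (fun s : ℝ => S (Q₀ (x - lam ℓ * s)) ℓ) 0
            + ((1 - 1 / (2 * α)) * 1 * deriv (fun s : ℝ => S (Q₀ (x - lam ℓ * s)) ℓ) 0
              + (1 - 1 / (2 * α)) * 0 * deriv (deriv (fun s : ℝ => S (Q₀ (x - lam ℓ * s)) ℓ)) 0))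
          + (1 / (2 * α) * deriv (fun s : ℝ => S (fun k => Q₀ (x - lam ℓ * s * (1 - α) - lam k * α * s) k
              + α * s * S (Q₀ (x - lam ℓ * s * (1 - α) - lam k * α * s)) k) ℓ) 0
            + (1 / (2 * α) * deriv (fun s : ℝ => S (fun k => Q₀ (x - lam ℓ * s * (1 - α) - lam k * α * s) k
              + α * s * S (Q₀ (x - lam ℓ * s * (1 - α) - lam k * α * s)) k) ℓ) 0
              + 0 / (2 * α) * deriv (deriv (fun s : ℝ => S (fun k => Q₀ (x - lam ℓ * s * (1 - α) - lam k * α * s) k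
              + α * s * S (Q₀ (x - lam ℓ * s * (1 - α) - lam k * α * s)) k) ℓ)) 0))) 0 :=
      ((l2'.comp 0 (l1 0)).mul_const (-(lam ℓ * 1))).add
        ((HasDerivAt.const_mul ((1 - 1 / (2 * α)) * 1) hg0').add
          ((HasDerivAt.const_mul (1 - 1 / (2 * α)) (hasDerivAt_id 0)).mul hdg))
        |>.add ((HasDerivAt.const_mul (1 / (2 * α)) hh0').add
          (((hasDerivAt_id 0).div_const (2 * α)).mul hdh))
    have hab : HasDerivAt (fun t => S (Q t x) ℓ - lam ℓ * deriv (fun y => Q t y ℓ) x)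
        (fderiv ℝ (fun u => S u ℓ) (Q₀ x) (fun k => S (Q₀ x) k - lam k * deriv Q₀ x k)
          - lam ℓ * (fderiv ℝ (fun u => S u ℓ) (Q₀ x) (deriv Q₀ x)
            - lam ℓ * deriv (deriv (fun z => Q₀ z ℓ)) x)) 0 :=
      ha.sub (HasDerivAt.const_mul (lam ℓ) hB)
    rw [hE0.deriv, hab.deriv, hg0.deriv, hh0.deriv]
    have hT1 : fderiv ℝ (fun u => S u ℓ) (Q₀ x) ((-(lam ℓ)) • deriv Q₀ x)
        = -(lam ℓ) * fderiv ℝ (fun u => S u ℓ) (Q₀ x) (deriv Q₀ x) := by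
      rw [map_smul, smul_eq_mul]
    have hveq : (fun k => α * S (Q₀ x) k - (lam ℓ * (1 - α) + lam k * α) * deriv Q₀ x k)
        = α • (fun k => S (Q₀ x) k - lam k * deriv Q₀ x k)
          - (lam ℓ * (1 - α)) • deriv Q₀ x := by
      funext k
      simp only [Pi.sub_apply, Pi.smul_apply, smul_eq_mul]
      ring
    have hT2 : fderiv ℝ (fun u => S u ℓ) (Q₀ x)
        (fun k => α * S (Q₀ x) k - (lam ℓ * (1 - α) + lam k * α) * deriv Q₀ x k)
        = α * fderiv ℝ (fun u => S u ℓ) (Q₀ x) (fun k => S (Q₀ x) k - lam k * deriv Q₀ x k)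
          - lam ℓ * (1 - α) * fderiv ℝ (fun u => S u ℓ) (Q₀ x) (deriv Q₀ x) := by
      rw [hveq, map_sub, map_smul, map_smul, smul_eq_mul, smul_eq_mul]
    rw [hT1, hT2]
    have h2q : deriv (deriv (fun y => Q₀ y ℓ)) (x - lam ℓ * 0)
        = deriv (deriv (fun z => Q₀ z ℓ)) x := by norm_num
    rw [h2q]
    field_simp
    ring
end

section
/- Let P(t,x) be the unique polynomial of the form a₀ + a₁x + a₂t + a₃x² + a₄xt + a₅t² + a₆xt² interpolating the interface point values q^n_{i±1/2}, q^{n+1/2}_{i±1/2}, q^{n+1}_{i±1/2} and matching the cell average q̄ⁿ_i at time tⁿ. Then (1/(ΔtΔx))∫_{tⁿ}^{tⁿ+Δt}∫_{x_{i−1/2}}^{x_{i+1/2}} P(t,x) dx dt = q̄ⁿ_i + (1/12)(−5(q^n_{i−1/2}+q^n_{i+1/2}) + (q^{n+1}_{i−1/2}+q^{n+1}_{i+1/2}) + 4(q^{n+1/2}_{i−1/2}+q^{n+1/2}_{i+1/2})). -/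
/-!
In time `P` is quadratic, so Simpson's rule integrates it exactly; in space the increment
`P(t, ·) - P(tⁿ, ·)` is affine, so the trapezoidal rule does. Hence the cell integral at time `t`
is `Δx q̄ⁿ` plus `Δx / 2` times the increment of the two interface values since `tⁿ`. Simpson's
rule in time then sees no increment at its first node, weight `4 / 6` at the midpoint and `1 / 6`
at the end, which gives the weights `4 / 12`, `1 / 12` and `-(4 + 1) / 12`.
-/

noncomputable def stmt8P (a : Fin 7 → ℝ) (t x : ℝ) : ℝ :=
  a 0 + a 1 * x + a 2 * t + a 3 * x ^ 2 + a 4 * x * t + a 5 * t ^ 2 + a 6 * x * t ^ 2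

open intervalIntegral

theorem integral_eq_simpson_of_quadratic {f : ℝ → ℝ} {c₀ c₁ c₂ : ℝ}
    (hf : ∀ t, f t = c₀ + c₁ * t + c₂ * t ^ 2) (a b : ℝ) :
    ∫ t in a..b, f t = (b - a) / 6 * (f a + 4 * f ((a + b) / 2) + f b) := by
  have hInt : ∀ g : ℝ → ℝ, Continuous g → IntervalIntegrable g MeasureTheory.volume a b :=
    fun g hg => hg.intervalIntegrable a b
  simp only [hf]
  rw [integral_add (hInt _ (by fun_prop)) (hInt _ (by fun_prop)),
    integral_add (hInt _ (by fun_prop)) (hInt _ (by fun_prop)),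
    integral_const, integral_const_mul, integral_const_mul, integral_id, integral_pow]
  simp only [smul_eq_mul]
  ring

theorem integral_eq_trapezoid_of_affine {f : ℝ → ℝ} {c₀ c₁ : ℝ}
    (hf : ∀ x, f x = c₀ + c₁ * x) (a b : ℝ) :
    ∫ x in a..b, f x = (b - a) / 2 * (f a + f b) := by
  rw [integral_eq_simpson_of_quadratic (c₂ := 0) (by simpa using hf)]
  simp only [hf]
  ring

theorem continuous_stmt8P (a : Fin 7 → ℝ) (t : ℝ) : Continuous (stmt8P a t) := by
  unfold stmt8P
  fun_prop

theorem stmt8P_sub_stmt8P (a : Fin 7 → ℝ) (t s x : ℝ) :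
    stmt8P a t x - stmt8P a s x
      = (a 2 * (t - s) + a 5 * (t ^ 2 - s ^ 2)) + (a 4 * (t - s) + a 6 * (t ^ 2 - s ^ 2)) * x := by
  unfold stmt8P
  ring

theorem integral_stmt8P_eq_add_trapezoid (a : Fin 7 → ℝ) (t s l r : ℝ) :
    ∫ x in l..r, stmt8P a t x
      = (∫ x in l..r, stmt8P a s x)
        + (r - l) / 2 * (stmt8P a t l + stmt8P a t r - stmt8P a s l - stmt8P a s r) := by
  have hsub := integral_eq_trapezoid_of_affine (stmt8P_sub_stmt8P a t s) l r
  rw [integral_sub ((continuous_stmt8P a t).intervalIntegrable l r)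
    ((continuous_stmt8P a s).intervalIntegrable l r)] at hsub
  linear_combination hsub

theorem integral_stmt8P_eq_quadratic (a : Fin 7 → ℝ) (l r t : ℝ) :
    ∫ x in l..r, stmt8P a t x
      = (∫ x in l..r, stmt8P a 0 x)
        + (r - l) / 2 * (2 * a 2 + a 4 * (l + r)) * t
        + (r - l) / 2 * (2 * a 5 + a 6 * (l + r)) * t ^ 2 := by
  rw [integral_stmt8P_eq_add_trapezoid a t 0]
  unfold stmt8P
  ring

/-- The space-time average of the interpolating polynomial yields the 1D Active Flux
source quadrature formula with weights (−5/12, 4/12, 1/12) on interface values and 1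
on the cell average. -/
theorem stmt_8 (Δx Δt tn xi : ℝ) (hΔx : 0 < Δx) (hΔt : 0 < Δt)
    (qln qrn qlh qrh qln1 qrn1 qbar : ℝ) (a : Fin 7 → ℝ)
    (h1 : stmt8P a (tn + Δt) (xi - Δx / 2) = qln1)
    (h2 : stmt8P a (tn + Δt) (xi + Δx / 2) = qrn1)
    (h3 : stmt8P a (tn + Δt / 2) (xi - Δx / 2) = qlh)
    (h4 : stmt8P a (tn + Δt / 2) (xi + Δx / 2) = qrh)
    (h5 : stmt8P a tn (xi - Δx / 2) = qln)
    (h6 : stmt8P a tn (xi + Δx / 2) = qrn)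
    (h7 : (∫ x in (xi - Δx / 2)..(xi + Δx / 2), stmt8P a tn x) = qbar * Δx) :
    (1 / (Δt * Δx)) * ∫ t in tn..(tn + Δt), ∫ x in (xi - Δx / 2)..(xi + Δx / 2), stmt8P a t x
      = qbar + (1 / 12) * (-5 * (qln + qrn) + (qln1 + qrn1) + 4 * (qlh + qrh)) := by
  have hcell : ∀ t, ∫ x in (xi - Δx / 2)..(xi + Δx / 2), stmt8P a t x
      = qbar * Δx + Δx / 2 * (stmt8P a t (xi - Δx / 2) + stmt8P a t (xi + Δx / 2) - qln - qrn) := by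
    intro t
    rw [integral_stmt8P_eq_add_trapezoid a t tn, h5, h6, h7]
    ring
  have hmid : (tn + (tn + Δt)) / 2 = tn + Δt / 2 := by ring
  rw [integral_eq_simpson_of_quadratic (integral_stmt8P_eq_quadratic a _ _), hmid,
    hcell (tn + Δt / 2), hcell (tn + Δt), h7, h1, h2, h3, h4]
  field_simp
  ring
end

section
/- The space-time quadrature rule with weights: 1 on the cell average q̄ⁿ, −5/12 on each interface value at time tⁿ, 4/12 on each interface value at t^{n+1/2}, and 1/12 on each interface value at tⁿ⁺¹, computes the exact space-time average (1/(ΔtΔx))∫∫ q dx dt for every polynomial q(t,x) of total degree ≤ 2 in (t,x). -/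
/-! Integrating out x turns the cell mean of q(t, ·) into the quadratic
c00 + c10 t + c20 t² + c02 Δx²/12 in t, so both sides reduce to closed forms in the six
coefficients. Conceptually: the sum of the two interface values exceeds twice that mean by a
constant independent of t, the interface weights −5, 4, 1 sum to zero, and what remains is
Simpson's rule for the time integral of the mean, exact on quadratics. -/

open intervalIntegral

lemma integral_quadratic (a b α β γ : ℝ) :
    ∫ x in a..b, (α + β * x + γ * x ^ 2)
      = α * (b - a) + β * (b ^ 2 - a ^ 2) / 2 + γ * (b ^ 3 - a ^ 3) / 3 := by
  have integrable : ∀ f : ℝ → ℝ, Continuous f → IntervalIntegrable f MeasureTheory.volume a b :=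
    fun f hf => hf.intervalIntegrable a b
  rw [integral_add (integrable _ (by fun_prop)) (integrable _ (by fun_prop)),
    integral_add (integrable _ (by fun_prop)) (integrable _ (by fun_prop)),
    integral_const_mul β (fun x => x)]
  simp only [integral_const, integral_const_mul, integral_id, integral_pow, smul_eq_mul]
  ring

lemma integral_bivariateQuadratic_centered (c00 c10 c01 c20 c11 c02 t L : ℝ) :
    ∫ x in (-(L / 2))..(L / 2), (c00 + c10 * t + c01 * x + c20 * t ^ 2 + c11 * t * x + c02 * x ^ 2)
      = (c00 + c10 * t + c20 * t ^ 2) * L + c02 * L ^ 3 / 12 :=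
  calc _ = ∫ x in (-(L / 2))..(L / 2),
          ((c00 + c10 * t + c20 * t ^ 2) + (c01 + c11 * t) * x + c02 * x ^ 2) := by
        congr 1; ext x; ring
    _ = _ := by rw [integral_quadratic]; ring

lemma integral_integral_bivariateQuadratic (c00 c10 c01 c20 c11 c02 T L : ℝ) :
    ∫ t in (0 : ℝ)..T, ∫ x in (-(L / 2))..(L / 2),
        (c00 + c10 * t + c01 * x + c20 * t ^ 2 + c11 * t * x + c02 * x ^ 2)
      = T * L * (c00 + c10 * T / 2 + c20 * T ^ 2 / 3 + c02 * L ^ 2 / 12) :=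
  calc _ = ∫ t in (0 : ℝ)..T,
          ((c00 * L + c02 * L ^ 3 / 12) + (c10 * L) * t + (c20 * L) * t ^ 2) := by
        simp_rw [integral_bivariateQuadratic_centered]; congr 1; ext t; ring
    _ = _ := by rw [integral_quadratic]; ring

/-- The 1D Active Flux space-time source quadrature (weights 1 on the average,
−5/12, 4/12, 1/12 on the interface values at times 0, Δt/2, Δt) is exact for
every polynomial q(t,x) of total degree ≤ 2. -/
theorem stmt_9 (Δx Δt : ℝ) (hΔx : 0 < Δx) (hΔt : 0 < Δt)
    (c00 c10 c01 c20 c11 c02 : ℝ) (q : ℝ → ℝ → ℝ)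
    (hq : q = fun t x => c00 + c10 * t + c01 * x + c20 * t ^ 2 + c11 * t * x + c02 * x ^ 2) :
    (1 / (Δt * Δx)) * ∫ t in (0:ℝ)..Δt, ∫ x in (-(Δx / 2))..(Δx / 2), q t x
      = ((1 / Δx) * ∫ x in (-(Δx / 2))..(Δx / 2), q 0 x)
        + (1 / 12) * (-5 * (q 0 (-(Δx / 2)) + q 0 (Δx / 2))
            + (q Δt (-(Δx / 2)) + q Δt (Δx / 2))
            + 4 * (q (Δt / 2) (-(Δx / 2)) + q (Δt / 2) (Δx / 2))) := by
  subst hq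
  rw [integral_integral_bivariateQuadratic, integral_bivariateQuadratic_centered]
  field_simp
  ring
end

section
/- Let μ = g/(2c²) and E = [[0, k−iμ, 0],[ig, 0, k−iμ],[0, c²(k−iμ), 0]] with g,k,c real, c>0. Then the eigenvalues of E are ω₁ = 0 and ω_{2,3} = ±c√(k²+μ²); in particular all eigenvalues are real. -/
/-!
The symbol has the zero pattern of the adjacency matrix of a path on three vertices, so its
characteristic determinant is `-ω (ω² - (a b + e f))`, where `a b` and `e f` are the products of
the two entries along each edge. Here `a b + e f = (k - iμ)(ig + c²(k - iμ))`, and `g = 2c²μ`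
turns `ig + c²(k - iμ)` into `c²(k + iμ)`, so the sum is `c²(k² + μ²)`, the square of a real.
-/

open Matrix Complex

theorem Matrix.det_path_three_sub_smul_one {R : Type*} [CommRing R] (a b e f ω : R) :
    det (!![0, a, 0; b, 0, e; 0, f, 0] - ω • (1 : Matrix (Fin 3) (Fin 3) R)) =
      -ω * (ω ^ 2 - (a * b + e * f)) := by
  simp [det_fin_three]
  ring

theorem neg_mul_sq_sub_sq_eq_zero_iff {K : Type*} [Field K] (ω s : K) :
    -ω * (ω ^ 2 - s ^ 2) = 0 ↔ ω = 0 ∨ ω = s ∨ ω = -s := by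
  rw [mul_eq_zero, neg_eq_zero, sub_eq_zero, sq_eq_sq_iff_eq_or_eq_neg]

theorem acoustic_symbol_weight_eq (g k c μ : ℝ) (hg : g = 2 * c ^ 2 * μ) :
    (k - I * μ) * (I * g) + (k - I * μ) * (c ^ 2 * (k - I * μ)) =
      ((c * √(k ^ 2 + μ ^ 2) : ℝ) : ℂ) ^ 2 := by
  have hsqrt : ((√(k ^ 2 + μ ^ 2) : ℝ) : ℂ) ^ 2 = k ^ 2 + μ ^ 2 := by
    exact_mod_cast Real.sq_sqrt (by positivity)
  rw [ofReal_mul, mul_pow, hsqrt, hg]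
  push_cast
  linear_combination (-(c : ℂ) ^ 2 * μ ^ 2) * I_sq

/-- Eigenvalues of the Fourier symbol of the transformed acoustics-with-gravity system:
with μ = g/(2c²), E = [[0,k−iμ,0],[ig,0,k−iμ],[0,c²(k−iμ),0]] has the real eigenvalues
0 and ±c√(k²+μ²). -/
theorem stmt_11 (g k c : ℝ) (hc : 0 < c) (μ : ℝ) (hμ : μ = g / (2 * c ^ 2)) (ω : ℂ) :
    (Matrix.det
        ((!![0, (k:ℂ) - Complex.I * (μ:ℂ), 0;
             Complex.I * (g:ℂ), 0, (k:ℂ) - Complex.I * (μ:ℂ);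
             0, (c:ℂ)^2 * ((k:ℂ) - Complex.I * (μ:ℂ)), 0]) - ω • 1) = 0)
    ↔ (ω = 0 ∨ ω = ((c * Real.sqrt (k ^ 2 + μ ^ 2) : ℝ) : ℂ)
        ∨ ω = -((c * Real.sqrt (k ^ 2 + μ ^ 2) : ℝ) : ℂ)) := by
  have hg : g = 2 * c ^ 2 * μ := by
    rw [hμ]
    field_simp
  rw [det_path_three_sub_smul_one, acoustic_symbol_weight_eq g k c μ hg,
    neg_mul_sq_sub_sq_eq_zero_iff]
end

section
/- Let f(t) = J₀(μ√((ct)² − (x−x′)²)) for |x−x′| < ct, where J₀ is the Bessel function of the first kind of order 0 and J₀′ = −J₁. Then u(t,x) = f(t) satisfies the Klein–Gordon-type equation ∂_t²u − c²∂_x²u + c²μ²u = 0 on the region |x−x′| < ct. -/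
/-- The Bessel function of the first kind of order 0, J₀(z) = ∑ (−1)^m/(m!)² (z/2)^{2m}. -/
noncomputable def besselJ0 (z : ℝ) : ℝ :=
  ∑' m : ℕ, (-1 : ℝ) ^ m / ((Nat.factorial m : ℝ) ^ 2) * (z / 2) ^ (2 * m)

/-!
Write `J₀(μ√s) = G(s) = ∑ aₘ sᵐ` with `aₘ = (−μ²/4)ᵐ / (m!)²`, an entire power series in `s`.
The coefficient recursion `(m + 1)² aₘ₊₁ = −(μ²/4) aₘ` says exactly that
`s G'' + G' + (μ²/4) G = 0`. Near a point with `|x − x'| < ct` the kernel is `G ∘ φ` with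
`φ = (ct)² − (x − x')² > 0`, so the chain rule gives
`∂ₜ²u − c²∂ₓ²u = G''(φ) (φₜ² − c²φₓ²) + G'(φ) (φₜₜ − c²φₓₓ) = 4c² (φ G''(φ) + G'(φ)) = −c²μ² G(φ)`.
-/

open Filter Topology

namespace KleinGordonKernel

def FactorialBounded (b : ℕ → ℝ) : Prop :=
  ∃ K r : ℝ, 0 ≤ r ∧ ∀ m, |b m| ≤ K * r ^ m / m.factorial

def derivCoeff (b : ℕ → ℝ) (m : ℕ) : ℝ := (m + 1) * b (m + 1)

noncomputable def powerSum (b : ℕ → ℝ) (z : ℝ) : ℝ := ∑' m, b m * z ^ m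

variable {b : ℕ → ℝ}

theorem factorialBounded_derivCoeff (hb : FactorialBounded b) :
    FactorialBounded (derivCoeff b) := by
  obtain ⟨K, r, hr, hK⟩ := hb
  refine ⟨K * r, r, hr, fun m => ?_⟩
  have hfact : ((m + 1).factorial : ℝ) = (m + 1) * m.factorial := by
    push_cast [Nat.factorial_succ]; ring
  calc |derivCoeff b m| = (m + 1) * |b (m + 1)| := by
        rw [derivCoeff, abs_mul, abs_of_nonneg (by positivity)]
    _ ≤ (m + 1) * (K * r ^ (m + 1) / (m + 1).factorial) := by gcongr; exact hK _
    _ = K * r * r ^ m / m.factorial := by rw [hfact, pow_succ]; field_simp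

theorem FactorialBounded.exists_summable_bound (hb : FactorialBounded b) (R : ℝ) :
    ∃ u : ℕ → ℝ, Summable u ∧ ∀ m y, |y| ≤ R → ‖b m * y ^ m‖ ≤ u m := by
  obtain ⟨K, r, hr, hK⟩ := hb
  refine ⟨fun m => K * (r * R) ^ m / m.factorial, ?_, fun m y hy => ?_⟩
  · simpa [mul_div_assoc] using (Real.summable_pow_div_factorial (r * R)).mul_left K
  · calc ‖b m * y ^ m‖ = |b m| * |y| ^ m := by rw [norm_mul, norm_pow]; rfl
      _ ≤ K * r ^ m / m.factorial * R ^ m :=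
        mul_le_mul (hK m) (pow_le_pow_left₀ (abs_nonneg y) hy m) (by positivity)
          ((abs_nonneg _).trans (hK m))
      _ = K * (r * R) ^ m / m.factorial := by ring

theorem FactorialBounded.summable (hb : FactorialBounded b) (s : ℝ) :
    Summable fun m => b m * s ^ m :=
  have ⟨_, hu, hbound⟩ := hb.exists_summable_bound |s|
  hu.of_norm_bounded fun m => hbound m s le_rfl

theorem FactorialBounded.hasDerivAt_powerSum (hb : FactorialBounded b) (s : ℝ) :
    HasDerivAt (powerSum b) (powerSum (derivCoeff b) s) s := by
  obtain ⟨u, hu, hbound⟩ := (factorialBounded_derivCoeff hb).exists_summable_bound (|s| + 1)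
  have hs : s ∈ Metric.ball (0 : ℝ) (|s| + 1) := by simp
  -- differentiate `b 0 + ∑ b (m + 1) z ^ (m + 1)` term by term on a ball around `s`
  have hterm : ∀ m y, HasDerivAt (fun z => b (m + 1) * z ^ (m + 1))
      (derivCoeff b m * y ^ m) y := fun m y =>
    ((hasDerivAt_pow (m + 1) y).const_mul (b (m + 1))).congr_deriv
      (by simp only [derivCoeff]; push_cast; ring)
  have htail := hasDerivAt_tsum_of_isPreconnected hu Metric.isOpen_ball
    (convex_ball (0 : ℝ) _).isPreconnected (fun m y _ => hterm m y)
    (fun m y hy => hbound m y (by simpa using (Metric.mem_ball.mp hy).le)) hs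
    ((summable_nat_add_iff 1).mpr (hb.summable s)) hs
  have hsplit : powerSum b = fun z => b 0 + ∑' m, b (m + 1) * z ^ (m + 1) := by
    ext z
    rw [powerSum, (hb.summable z).tsum_eq_zero_add, pow_zero, mul_one]
  rw [hsplit]
  exact htail.const_add _

/-- On coefficients, `s G'' + G' = (s G')'`. -/
theorem FactorialBounded.mul_powerSum_derivCoeff_derivCoeff_add (hb : FactorialBounded b)
    (s : ℝ) :
    s * powerSum (derivCoeff (derivCoeff b)) s + powerSum (derivCoeff b) s
      = powerSum (fun m => ((m : ℝ) + 1) ^ 2 * b (m + 1)) s := by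
  have hd := factorialBounded_derivCoeff hb
  have hG1 := (hd.summable s).hasSum
  have hsG2 : HasSum (fun m => m * derivCoeff b m * s ^ m)
      (s * powerSum (derivCoeff (derivCoeff b)) s) := by
    rw [← hasSum_nat_add_iff' 1, Finset.sum_range_one, Nat.cast_zero, zero_mul, zero_mul,
      sub_zero]
    refine (((factorialBounded_derivCoeff hd).summable s).hasSum.mul_left s).congr_fun
      fun m => ?_
    simp only [derivCoeff]
    push_cast
    ring
  refine ((hsG2.add hG1).congr_fun fun m => ?_).tsum_eq.symm
  simp only [derivCoeff]
  ring

theorem iteratedDeriv_two_comp_of_eventuallyEq {f G G' G'' φ φ' : ℝ → ℝ} {φ'' x : ℝ}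
    (hG : ∀ s, HasDerivAt G (G' s) s) (hG' : ∀ s, HasDerivAt G' (G'' s) s)
    (hφ : ∀ y, HasDerivAt φ (φ' y) y) (hφ' : HasDerivAt φ' φ'' x) (hf : f =ᶠ[𝓝 x] G ∘ φ) :
    iteratedDeriv 2 f x = G'' (φ x) * φ' x ^ 2 + G' (φ x) * φ'' := by
  have hderiv : deriv (G ∘ φ) = fun y => G' (φ y) * φ' y :=
    funext fun y => ((hG (φ y)).comp y (hφ y)).deriv
  rw [hf.iteratedDeriv_eq, iteratedDeriv_succ, iteratedDeriv_one, hderiv]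
  exact (((hG' (φ x)).comp x (hφ x)).mul hφ').deriv.trans (by rw [Function.comp_apply]; ring)

noncomputable def besselJ0SqrtCoeff (μ : ℝ) (m : ℕ) : ℝ := (-(μ ^ 2 / 4)) ^ m / m.factorial ^ 2

theorem besselJ0_mul_sqrt (μ : ℝ) {s : ℝ} (hs : 0 ≤ s) :
    besselJ0 (μ * √s) = powerSum (besselJ0SqrtCoeff μ) s := by
  refine tsum_congr fun m => ?_
  rw [besselJ0SqrtCoeff, pow_mul, div_pow, mul_pow, Real.sq_sqrt hs, neg_pow (μ ^ 2 / 4)]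
  ring

theorem factorialBounded_besselJ0SqrtCoeff (μ : ℝ) : FactorialBounded (besselJ0SqrtCoeff μ) := by
  refine ⟨1, μ ^ 2 / 4, by positivity, fun m => ?_⟩
  have hfact : (1 : ℝ) ≤ m.factorial := by exact_mod_cast m.factorial_pos
  rw [besselJ0SqrtCoeff, abs_div, abs_pow, abs_neg, abs_of_nonneg (by positivity : 0 ≤ μ ^ 2 / 4),
    abs_of_nonneg (by positivity), one_mul]
  exact div_le_div_of_nonneg_left (by positivity) (by positivity) (by nlinarith)

theorem besselJ0SqrtCoeff_succ (μ : ℝ) (m : ℕ) :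
    ((m : ℝ) + 1) ^ 2 * besselJ0SqrtCoeff μ (m + 1) = -(μ ^ 2 / 4) * besselJ0SqrtCoeff μ m := by
  rw [besselJ0SqrtCoeff, besselJ0SqrtCoeff, Nat.factorial_succ, Nat.cast_mul,
    pow_succ (-(μ ^ 2 / 4))]
  push_cast
  field_simp

theorem besselJ0Sqrt_ode (μ s : ℝ) :
    s * powerSum (derivCoeff (derivCoeff (besselJ0SqrtCoeff μ))) s
      + powerSum (derivCoeff (besselJ0SqrtCoeff μ)) s
      + μ ^ 2 / 4 * powerSum (besselJ0SqrtCoeff μ) s = 0 := by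
  rw [(factorialBounded_besselJ0SqrtCoeff μ).mul_powerSum_derivCoeff_derivCoeff_add, powerSum,
    powerSum]
  simp_rw [besselJ0SqrtCoeff_succ, mul_assoc, tsum_mul_left]
  ring

theorem iteratedDeriv_two_besselJ0_mul_sqrt (μ : ℝ) {φ φ' : ℝ → ℝ} {φ'' x : ℝ}
    (hφ : ∀ y, HasDerivAt φ (φ' y) y) (hφ' : HasDerivAt φ' φ'' x) (hx : 0 < φ x) :
    iteratedDeriv 2 (fun y => besselJ0 (μ * √(φ y))) x
      = powerSum (derivCoeff (derivCoeff (besselJ0SqrtCoeff μ))) (φ x) * φ' x ^ 2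
        + powerSum (derivCoeff (besselJ0SqrtCoeff μ)) (φ x) * φ'' := by
  have hb := factorialBounded_besselJ0SqrtCoeff μ
  refine iteratedDeriv_two_comp_of_eventuallyEq hb.hasDerivAt_powerSum
    (factorialBounded_derivCoeff hb).hasDerivAt_powerSum hφ hφ' ?_
  filter_upwards [continuousAt_const.eventually_lt (hφ x).continuousAt hx] with y hy
  exact besselJ0_mul_sqrt μ hy.le

end KleinGordonKernel

open KleinGordonKernel in
theorem stmt_18_general (c μ x' : ℝ)
    (u : ℝ → ℝ → ℝ)
    (hu : u = fun t x => besselJ0 (μ * Real.sqrt ((c * t) ^ 2 - (x - x') ^ 2))) :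
    ∀ t x : ℝ, |x - x'| < c * t →
      iteratedDeriv 2 (fun τ => u τ x) t - c ^ 2 * iteratedDeriv 2 (fun y => u t y) x
        + c ^ 2 * μ ^ 2 * u t x = 0 := by
  subst hu
  intro t x hx
  beta_reduce
  have hφ : 0 < (c * t) ^ 2 - (x - x') ^ 2 := by
    nlinarith [abs_nonneg (x - x'), sq_abs (x - x')]
  have hφt : ∀ τ, HasDerivAt (fun τ => (c * τ) ^ 2 - (x - x') ^ 2) (2 * c ^ 2 * τ) τ :=
    fun τ => ((((hasDerivAt_id τ).const_mul c).pow 2).sub_const _).congr_deriv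
      (by simp only [id]; ring)
  have hφx : ∀ y, HasDerivAt (fun y => (c * t) ^ 2 - (y - x') ^ 2) (-2 * (y - x')) y :=
    fun y => ((((hasDerivAt_id y).sub_const x').pow 2).const_sub _).congr_deriv
      (by simp only [id]; ring)
  rw [iteratedDeriv_two_besselJ0_mul_sqrt μ hφt ((hasDerivAt_id t).const_mul _) hφ,
    iteratedDeriv_two_besselJ0_mul_sqrt μ hφx (((hasDerivAt_id x).sub_const x').const_mul _) hφ,
    besselJ0_mul_sqrt μ hφ.le]
  linear_combination 4 * c ^ 2 * besselJ0Sqrt_ode μ ((c * t) ^ 2 - (x - x') ^ 2)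

/-- The kernel u(t,x) = J₀(μ√((ct)² − (x−x′)²)) satisfies the Klein–Gordon-type
equation ∂ₜ²u − c²∂ₓ²u + c²μ²u = 0 on the region |x − x′| < ct. -/
theorem stmt_18 (c μ x' : ℝ) (hc : 0 < c)
    (u : ℝ → ℝ → ℝ)
    (hu : u = fun t x => besselJ0 (μ * Real.sqrt ((c * t) ^ 2 - (x - x') ^ 2))) :
    ∀ t x : ℝ, |x - x'| < c * t →
      iteratedDeriv 2 (fun τ => u τ x) t - c ^ 2 * iteratedDeriv 2 (fun y => u t y) x
        + c ^ 2 * μ ^ 2 * u t x = 0 :=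
  stmt_18_general c μ x' u hu
end
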